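/- Fix μ > 1. For every T > 0, the function x ↦ (μ/(μ²+1))·log( (a₊/(8μ³yc₋))·[ (μ²+1)c₋a₊e^{2T} + μ⁴y(1+x) + μ(1+μ²)(y²-x²+1) - 6μ²y + y(1-x) ] ), restricted to the segment y = μ^{-1}(1+x), x ∈ [0, (μ²-1)/(μ²+1)), where a₊ = μy + 1 - x and c₋ = μ(1-x) - y, attains its minimum at x* = (e^T - 1)(μ²-1)/(e^T(μ²+1) + μ²-1), and the minimum value equals (2μ/(μ²+1))·log( (e^T(μ²+1) + μ²-1)/(2μ²) ). -/

import Mathlib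

/-!
On the segment, with `s = μ² + 1`, `d = μ² - 1`, `β = d - s x` and `E = e^T`, the argument of the
logarithm in `Gfun` equals `((s E)² / (s (1 + x)) + d² / β) / (2 μ²)`. The two denominators add up
to the constant `s (1 + x) + β = 2 μ²`, so Sedrakyan's (Titu's) inequality bounds the argument below
by `((s E + d) / (2 μ²))²`, with equality exactly when `E β = d (1 + x)`, i.e. at `x = x*`.
-/

/-- The Bellman function `B_II(-T, x, y)` of the length-minimization problem,
restricted to the lower-right boundary segment `y = μ⁻¹ (1 + x)`. -/
noncomputable def Gfun (μ T x : ℝ) : ℝ :=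
  let y := μ⁻¹ * (1 + x)
  (μ / (μ ^ 2 + 1)) *
    Real.log ((μ * y + 1 - x) / (8 * μ ^ 3 * y * (μ * (1 - x) - y)) *
      ((μ ^ 2 + 1) * (μ * (1 - x) - y) * (μ * y + 1 - x) * Real.exp (2 * T) +
        μ ^ 4 * y * (1 + x) + μ * (1 + μ ^ 2) * (y ^ 2 - x ^ 2 + 1) -
        6 * μ ^ 2 * y + y * (1 - x)))

open Real

section Sedrakyan

variable {u v : ℝ}

theorem add_sq_div_add_le_sq_div_add_sq_div (a b : ℝ) (hu : 0 < u) (hv : 0 < v) :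
    (a + b) ^ 2 / (u + v) ≤ a ^ 2 / u + b ^ 2 / v := by
  simpa [Fin.sum_univ_two] using
    Finset.sq_sum_div_le_sum_sq_div Finset.univ ![a, b] (g := ![u, v])
      (by simp [Fin.forall_fin_two, hu, hv])

theorem sq_div_add_sq_div_of_mul_eq_mul {a b : ℝ} (hu : u ≠ 0) (hv : v ≠ 0) (huv : u + v ≠ 0)
    (h : a * v = b * u) : a ^ 2 / u + b ^ 2 / v = (a + b) ^ 2 / (u + v) := by
  field_simp
  linear_combination (a * v - b * u) * h

end Sedrakyan

section Segment

variable {μ T x : ℝ}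

theorem Gfun_eq_log_sq_div_add_sq_div (hμ : μ ≠ 0) (hx : 1 + x ≠ 0)
    (hβ : μ ^ 2 - 1 - (μ ^ 2 + 1) * x ≠ 0) :
    Gfun μ T x = μ / (μ ^ 2 + 1) * log ((((μ ^ 2 + 1) * exp T) ^ 2 / ((μ ^ 2 + 1) * (1 + x)) +
      (μ ^ 2 - 1) ^ 2 / (μ ^ 2 - 1 - (μ ^ 2 + 1) * x)) / (2 * μ ^ 2)) := by
  have hexp : exp (2 * T) = exp T ^ 2 := by rw [← exp_nat_mul]; norm_num
  have hc : μ * (1 - x) - μ⁻¹ * (1 + x) = (μ ^ 2 - 1 - (μ ^ 2 + 1) * x) / μ := by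
    field_simp; ring
  have hs : μ ^ 2 + 1 ≠ 0 := by positivity
  unfold Gfun
  simp only
  rw [hexp, hc]
  congr 2
  rw [div_add_div _ _ (mul_ne_zero hs hx) hβ, div_div, div_mul_eq_mul_div, div_eq_div_iff]
  · field_simp
    ring
  all_goals positivity

theorem mul_log_add_sq_div_div_eq (μ E : ℝ) (hμ : μ ≠ 0) :
    μ / (μ ^ 2 + 1) * log (((μ ^ 2 + 1) * E + (μ ^ 2 - 1)) ^ 2 / (2 * μ ^ 2) / (2 * μ ^ 2)) =
      2 * μ / (μ ^ 2 + 1) * log ((E * (μ ^ 2 + 1) + μ ^ 2 - 1) / (2 * μ ^ 2)) := by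
  rw [show ((μ ^ 2 + 1) * E + (μ ^ 2 - 1)) ^ 2 / (2 * μ ^ 2) / (2 * μ ^ 2) =
    ((E * (μ ^ 2 + 1) + μ ^ 2 - 1) / (2 * μ ^ 2)) ^ 2 by field_simp; ring, log_pow]
  push_cast
  ring

theorem mul_log_le_Gfun (hμ : 1 < μ) (hx : 0 < 1 + x) (hβ : 0 < μ ^ 2 - 1 - (μ ^ 2 + 1) * x) :
    2 * μ / (μ ^ 2 + 1) * log ((exp T * (μ ^ 2 + 1) + μ ^ 2 - 1) / (2 * μ ^ 2)) ≤
      Gfun μ T x := by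
  have hμ0 : 0 < μ := by linarith
  have hs : 0 < μ ^ 2 + 1 := by positivity
  have hD : 0 < (μ ^ 2 + 1) * exp T + (μ ^ 2 - 1) := by nlinarith [exp_pos T]
  have hsedrakyan := add_sq_div_add_le_sq_div_add_sq_div ((μ ^ 2 + 1) * exp T) (μ ^ 2 - 1)
    (mul_pos hs hx) hβ
  rw [show (μ ^ 2 + 1) * (1 + x) + (μ ^ 2 - 1 - (μ ^ 2 + 1) * x) = 2 * μ ^ 2 by ring]
    at hsedrakyan
  rw [← mul_log_add_sq_div_div_eq μ (exp T) hμ0.ne',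
    Gfun_eq_log_sq_div_add_sq_div hμ0.ne' hx.ne' hβ.ne']
  gcongr

noncomputable def segmentMinimizer (μ T : ℝ) : ℝ :=
  (exp T - 1) * (μ ^ 2 - 1) / (exp T * (μ ^ 2 + 1) + μ ^ 2 - 1)

theorem segmentMinimizer_mem (hμ : 1 < μ) (hT : 0 < T) :
    segmentMinimizer μ T ∈ Set.Ico 0 ((μ ^ 2 - 1) / (μ ^ 2 + 1)) := by
  have hE : 1 < exp T := one_lt_exp_iff.mpr hT
  have hd : 0 < μ ^ 2 - 1 := by nlinarith
  have hD : 0 < exp T * (μ ^ 2 + 1) + μ ^ 2 - 1 := by nlinarith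
  refine ⟨div_nonneg (by nlinarith) hD.le, ?_⟩
  rw [segmentMinimizer, div_lt_div_iff₀ hD (by positivity)]
  nlinarith [mul_pos hd (by positivity : (0 : ℝ) < μ ^ 2)]

theorem Gfun_segmentMinimizer (hμ : 1 < μ) :
    Gfun μ T (segmentMinimizer μ T) =
      2 * μ / (μ ^ 2 + 1) * log ((exp T * (μ ^ 2 + 1) + μ ^ 2 - 1) / (2 * μ ^ 2)) := by
  have hμ0 : 0 < μ := by linarith
  have hd : 0 < μ ^ 2 - 1 := by nlinarith
  have hD : 0 < exp T * (μ ^ 2 + 1) + μ ^ 2 - 1 := by nlinarith [exp_pos T]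
  have hx : 1 + segmentMinimizer μ T =
      2 * μ ^ 2 * exp T / (exp T * (μ ^ 2 + 1) + μ ^ 2 - 1) := by
    rw [segmentMinimizer]; field_simp; ring
  have hβ : μ ^ 2 - 1 - (μ ^ 2 + 1) * segmentMinimizer μ T =
      2 * μ ^ 2 * (μ ^ 2 - 1) / (exp T * (μ ^ 2 + 1) + μ ^ 2 - 1) := by
    rw [segmentMinimizer, eq_div_iff hD.ne', sub_mul, mul_assoc, div_mul_cancel₀ _ hD.ne']
    ring
  have hx0 : 1 + segmentMinimizer μ T ≠ 0 := by rw [hx]; positivity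
  have hβ0 : μ ^ 2 - 1 - (μ ^ 2 + 1) * segmentMinimizer μ T ≠ 0 := by rw [hβ]; positivity
  rw [Gfun_eq_log_sq_div_add_sq_div hμ0.ne' hx0 hβ0,
    sq_div_add_sq_div_of_mul_eq_mul (by positivity) hβ0 (by rw [hx, hβ]; positivity)
      (by rw [hx, hβ]; ring),
    show (μ ^ 2 + 1) * (1 + segmentMinimizer μ T) +
      (μ ^ 2 - 1 - (μ ^ 2 + 1) * segmentMinimizer μ T) = 2 * μ ^ 2 by ring,
    mul_log_add_sq_div_div_eq μ (exp T) hμ0.ne']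

end Segment

theorem stmt17 (μ : ℝ) (hμ : 1 < μ) (T : ℝ) (hT : 0 < T)
    (xstar : ℝ)
    (hxstar : xstar = (Real.exp T - 1) * (μ ^ 2 - 1) /
      (Real.exp T * (μ ^ 2 + 1) + μ ^ 2 - 1)) :
    xstar ∈ Set.Ico (0 : ℝ) ((μ ^ 2 - 1) / (μ ^ 2 + 1)) ∧
    (∀ x ∈ Set.Ico (0 : ℝ) ((μ ^ 2 - 1) / (μ ^ 2 + 1)), Gfun μ T xstar ≤ Gfun μ T x) ∧
    Gfun μ T xstar = (2 * μ / (μ ^ 2 + 1)) *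
      Real.log ((Real.exp T * (μ ^ 2 + 1) + μ ^ 2 - 1) / (2 * μ ^ 2)) := by
  subst hxstar
  refine ⟨segmentMinimizer_mem hμ hT, fun x ⟨hx0, hx1⟩ ↦ ?_, Gfun_segmentMinimizer hμ⟩
  have hβ : 0 < μ ^ 2 - 1 - (μ ^ 2 + 1) * x := by
    rw [lt_div_iff₀ (by positivity)] at hx1
    linarith
  exact (Gfun_segmentMinimizer hμ).trans_le (mul_log_le_Gfun hμ (by linarith) hβ)
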